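/- arXiv:0809.1952 — 4 statements merged into one kernel-verified Lean document; each statement's English description precedes it below -/
import Mathlib

section
/- (Radialisation.) Let h: ℝ³×(ℝ∖{0}) → ℂ be a smooth function that is K'-invariant, i.e. h(A(x₁,x₂), (det A)x₃, (det A)t) = h(x₁,x₂,x₃,t) for every A ∈ O(2). Then there exists a unique smooth function f: ℝ³×(ℝ³∖{0}) → ℂ that is SO(3)-invariant (f(kx,ky)=f(x,y) for all k∈SO(3)) and satisfies f(x,(0,0,t)) = h(x,t) for all x∈ℝ³ and t≠0; explicitly, f(x,y) = h(k⁻¹x, t) whenever y = k·(0,0,t) with k∈SO(3) and t≠0, and this is well defined. -/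
open MeasureTheory Complex Matrix

noncomputable section

abbrev V3 := Fin 3 → ℝ
abbrev Mat3 := Matrix (Fin 3) (Fin 3) ℝ

instance : MeasurableSpace Mat3 := (inferInstance : MeasurableSpace (Fin 3 → Fin 3 → ℝ))

/-- The set of special orthogonal 3×3 real matrices. -/
def SO3 : Set Mat3 := {A | A * A.transpose = 1 ∧ A.det = 1}

/-- `SO(3)`-invariance of a function on `ℝ³ × ℝ³` (simultaneous action on both factors). -/
def Inv3 (F : V3 × V3 → ℂ) : Prop :=
  ∀ k ∈ SO3, ∀ x y : V3, F (k.mulVec x, k.mulVec y) = F (x, y)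

/-- The orthogonal group `O(2)` as a set of 2×2 matrices. -/
def O2 : Set (Matrix (Fin 2) (Fin 2) ℝ) := {A | A * A.transpose = 1}

/-- The action of `A ∈ O(2)` on `ℝ³ × ℝ`:
`A·(x₁,x₂,x₃,t) = (A(x₁,x₂), (det A)x₃, (det A)t)`. -/
def KAct (A : Matrix (Fin 2) (Fin 2) ℝ) (p : (Fin 3 → ℝ) × ℝ) : (Fin 3 → ℝ) × ℝ :=
  (![A.mulVec ![p.1 0, p.1 1] 0, A.mulVec ![p.1 0, p.1 1] 1, A.det * p.1 2], A.det * p.2)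

/-- `K'`-invariance of a function on `ℝ³ × ℝ`. -/
def InvK' (G : (Fin 3 → ℝ) × ℝ → ℂ) : Prop := ∀ A ∈ O2, ∀ p, G (KAct A p) = G p


/-- `SO(3)`-invariance away from `y = 0`. -/
def InvOff (f : V3 × V3 → ℂ) : Prop :=
  ∀ k ∈ SO3, ∀ x y : V3, y ≠ 0 → f (k.mulVec x, k.mulVec y) = f (x, y)

/-- `f` restricts to `h` on the `y₃`-axis, away from `t = 0`. -/
def RestrictsTo (f : V3 × V3 → ℂ) (h : V3 × ℝ → ℂ) : Prop :=
  ∀ (x : V3) (t : ℝ), t ≠ 0 → f (x, ![0, 0, t]) = h (x, t)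

/-! ### Auxiliary material -/

/-- Cross product on `ℝ³`. -/
def cp (a b : V3) : V3 :=
  ![a 1 * b 2 - a 2 * b 1, a 2 * b 0 - a 0 * b 2, a 0 * b 1 - a 1 * b 0]

lemma cp0 (a b : V3) : cp a b 0 = a 1 * b 2 - a 2 * b 1 := rfl
lemma cp1 (a b : V3) : cp a b 1 = a 2 * b 0 - a 0 * b 2 := rfl
lemma cp2 (a b : V3) : cp a b 2 = a 0 * b 1 - a 1 * b 0 := rfl

lemma dot3 (a b : V3) : a ⬝ᵥ b = a 0 * b 0 + a 1 * b 1 + a 2 * b 2 := by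
  simp [dotProduct, Fin.sum_univ_three]

lemma dot_pos {z : V3} (hz : z ≠ 0) : 0 < z ⬝ᵥ z := by
  obtain ⟨i, hi⟩ := Function.ne_iff.1 hz
  simp only [Pi.zero_apply] at hi
  exact Finset.sum_pos' (fun j _ => mul_self_nonneg _)
    ⟨i, Finset.mem_univ i, mul_self_pos.mpr hi⟩

lemma cp_zero_left (a : V3) : cp 0 a = 0 := by
  funext i; fin_cases i <;> simp [cp]

lemma cp_ne_zero_imp {y a : V3} (h : cp y a ≠ 0) : y ≠ 0 := by
  intro h0; exact h (by rw [h0, cp_zero_left])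

lemma exists_axis {y : V3} (hy : y ≠ 0) : ∃ a : V3, cp y a ≠ 0 := by
  by_cases h1 : y 1 = 0 ∧ y 2 = 0
  · have hy0 : y 0 ≠ 0 := by
      intro h0; apply hy; funext i; fin_cases i <;> simp [h0, h1.1, h1.2]
    refine ⟨![0, 1, 0], fun hc => hy0 ?_⟩
    have := congrFun hc 2
    simpa [cp] using this
  · refine ⟨![1, 0, 0], fun hc => h1 ⟨?_, ?_⟩⟩
    · have := congrFun hc 2
      simpa [cp] using this
    · have := congrFun hc 1
      simpa [cp] using this

/-- The matrix with columns `u`, `v`, `w`. -/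
def colMat (u v w : V3) : Mat3 := Matrix.of fun i j => ![u, v, w] j i

lemma frame_so3 {v w : V3} (hv : v ⬝ᵥ v = 1) (hw : w ⬝ᵥ w = 1) (hvw : v ⬝ᵥ w = 0) :
    colMat (cp v w) v w ∈ SO3 := by
  rw [dot3] at hv hw hvw
  constructor
  · rw [mul_eq_one_comm]
    ext i j
    fin_cases i <;> fin_cases j <;>
      simp [Matrix.mul_apply, Fin.sum_univ_three, Matrix.one_apply, colMat, cp] <;>
      first
        | ring1
        | linear_combination hv
        | linear_combination hw
        | linear_combination hvw
        | linear_combination -hvw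
        | linear_combination (w 0 * w 0 + w 1 * w 1 + w 2 * w 2) * hv + hw -
            (v 0 * w 0 + v 1 * w 1 + v 2 * w 2) * hvw
  · rw [Matrix.det_fin_three]
    simp [colMat, cp]
    linear_combination (w 0 * w 0 + w 1 * w 1 + w 2 * w 2) * hv + hw -
        (v 0 * w 0 + v 1 * w 1 + v 2 * w 2) * hvw

lemma frame_mulVec (u v w : V3) (t : ℝ) :
    (colMat u v w).mulVec ![0, 0, t] = fun i => t * w i := by
  funext i
  simp [Matrix.mulVec, dotProduct, Fin.sum_univ_three, colMat]
  ring

lemma frame_transpose_mulVec (u v w : V3) (x : V3) :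
    (colMat u v w)ᵀ.mulVec x = ![x ⬝ᵥ u, x ⬝ᵥ v, x ⬝ᵥ w] := by
  funext i
  fin_cases i <;>
    simp [Matrix.mulVec, dotProduct, Fin.sum_univ_three, colMat, Matrix.transpose_apply, dot3] <;>
    ring

/-- Frame adapted to `y`, constructed from an auxiliary vector `a` with `cp y a ≠ 0`. -/
lemma frame_data {y a : V3} (hcp : cp y a ≠ 0) :
    ∃ k ∈ SO3, k.mulVec ![0, 0, Real.sqrt (y ⬝ᵥ y)] = y ∧
      ∀ x : V3, kᵀ.mulVec x =
        ![(Real.sqrt (cp y a ⬝ᵥ cp y a))⁻¹ *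
            ((Real.sqrt (y ⬝ᵥ y))⁻¹ * (x ⬝ᵥ cp (cp y a) y)),
          (Real.sqrt (cp y a ⬝ᵥ cp y a))⁻¹ * (x ⬝ᵥ cp y a),
          (Real.sqrt (y ⬝ᵥ y))⁻¹ * (x ⬝ᵥ y)] := by
  have hy : y ≠ 0 := cp_ne_zero_imp hcp
  have hny : 0 < y ⬝ᵥ y := dot_pos hy
  have hcs : 0 < cp y a ⬝ᵥ cp y a := dot_pos hcp
  set n := Real.sqrt (y ⬝ᵥ y) with hn
  set s := Real.sqrt (cp y a ⬝ᵥ cp y a) with hs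
  have hnpos : 0 < n := Real.sqrt_pos.2 hny
  have hspos : 0 < s := Real.sqrt_pos.2 hcs
  have hn2 : n ^ 2 = y 0 * y 0 + y 1 * y 1 + y 2 * y 2 := by
    rw [hn, Real.sq_sqrt hny.le, dot3]
  have hs2 : s ^ 2 = cp y a 0 * cp y a 0 + cp y a 1 * cp y a 1 + cp y a 2 * cp y a 2 := by
    rw [hs, Real.sq_sqrt hcs.le, dot3]
  set w : V3 := fun i => n⁻¹ * y i with hwdef
  set v : V3 := fun i => s⁻¹ * cp y a i with hvdef
  have hv : v ⬝ᵥ v = 1 := by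
    rw [dot3, hvdef]
    field_simp
    first
      | linear_combination hs2
      | linear_combination -hs2
      | linear_combination 2 * hs2
      | linear_combination (-2 : ℝ) * hs2
  have hw : w ⬝ᵥ w = 1 := by
    rw [dot3, hwdef]
    field_simp
    first
      | linear_combination hn2
      | linear_combination -hn2
      | linear_combination 2 * hn2
      | linear_combination (-2 : ℝ) * hn2
  have hvw : v ⬝ᵥ w = 0 := by
    rw [dot3, hvdef, hwdef]
    simp only [cp0, cp1, cp2]
    ring
  refine ⟨colMat (cp v w) v w, frame_so3 hv hw hvw, ?_, ?_⟩
  · rw [frame_mulVec]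
    funext i
    show n * (n⁻¹ * y i) = y i
    rw [← mul_assoc, mul_inv_cancel₀ hnpos.ne', one_mul]
  · intro x
    rw [frame_transpose_mulVec]
    funext i
    fin_cases i
    · show x ⬝ᵥ cp v w = s⁻¹ * (n⁻¹ * (x ⬝ᵥ cp (cp y a) y))
      rw [dot3, dot3]
      simp only [cp0, cp1, cp2, hvdef, hwdef]
      ring
    · show x ⬝ᵥ v = s⁻¹ * (x ⬝ᵥ cp y a)
      rw [dot3, dot3]
      simp only [hvdef]
      ring
    · show x ⬝ᵥ w = n⁻¹ * (x ⬝ᵥ y)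
      rw [dot3, dot3]
      simp only [hwdef]
      ring

lemma O2_mem {a b c d : ℝ} (h1 : a * a + b * b = 1) (h2 : c * c + d * d = 1)
    (h3 : a * c + b * d = 0) : !![a, b; c, d] ∈ O2 := by
  show _ * _ = 1
  ext i j
  fin_cases i <;> fin_cases j <;>
    simp [Matrix.mul_apply, Fin.sum_univ_two, Matrix.one_apply, Matrix.cons_transpose,
      Matrix.head_cons, Matrix.vecHead, Matrix.vecTail] <;>
    first
      | linear_combination h1
      | linear_combination h2
      | linear_combination h3

lemma KAct_explicit (a b c d : ℝ) (x : V3) (s : ℝ) :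
    KAct !![a, b; c, d] (x, s) =
      (![a * x 0 + b * x 1, c * x 0 + d * x 1, (a * d - b * c) * x 2], (a * d - b * c) * s) := by
  unfold KAct
  rw [Matrix.det_fin_two_of]
  refine Prod.ext ?_ rfl
  funext i
  fin_cases i <;> simp [Matrix.mulVec, dotProduct, Fin.sum_univ_two]

/-- The radialised function. -/
def fdef (h : V3 × ℝ → ℂ) (p : V3 × V3) : ℂ :=
  h (![Real.sqrt (p.1 ⬝ᵥ p.1 - (p.1 ⬝ᵥ p.2) ^ 2 / (p.2 ⬝ᵥ p.2)), 0,
      (p.1 ⬝ᵥ p.2) / Real.sqrt (p.2 ⬝ᵥ p.2)], Real.sqrt (p.2 ⬝ᵥ p.2))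

lemma mulVec_dot {k : Mat3} (hk : kᵀ * k = 1) (a b : V3) :
    k.mulVec a ⬝ᵥ k.mulVec b = a ⬝ᵥ b := by
  rw [Matrix.dotProduct_mulVec, ← Matrix.mulVec_transpose, Matrix.mulVec_mulVec, hk,
    Matrix.one_mulVec]

lemma fdef_inv (h : V3 × ℝ → ℂ) {k : Mat3} (hk : k * kᵀ = 1) (x y : V3) :
    fdef h (k.mulVec x, k.mulVec y) = fdef h (x, y) := by
  have hk' : kᵀ * k = 1 := mul_eq_one_comm.mp hk
  unfold fdef
  simp only [mulVec_dot hk']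

lemma transpose_so3 {k : Mat3} (hk : k ∈ SO3) : kᵀ ∈ SO3 :=
  ⟨by rw [Matrix.transpose_transpose]; exact mul_eq_one_comm.mp hk.1,
   by rw [Matrix.det_transpose]; exact hk.2⟩

lemma ktk {k : Mat3} (hk : k ∈ SO3) (z : V3) : kᵀ.mulVec (k.mulVec z) = z := by
  rw [Matrix.mulVec_mulVec, mul_eq_one_comm.mp hk.1, Matrix.one_mulVec]

lemma fdef_restrict (h : V3 × ℝ → ℂ)
    (hinv : ∀ A ∈ O2, ∀ p : V3 × ℝ, p.2 ≠ 0 → h (KAct A p) = h p)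
    (x : V3) (t : ℝ) (ht : t ≠ 0) : fdef h (x, ![0, 0, t]) = h (x, t) := by
  have hd1 : x ⬝ᵥ (![0, 0, t] : V3) = x 2 * t := by rw [dot3]; simp
  have hd2 : (![0, 0, t] : V3) ⬝ᵥ ![0, 0, t] = t ^ 2 := by rw [dot3]; simp; ring
  have e1 : x ⬝ᵥ x - (x 2 * t) ^ 2 / t ^ 2 = x 0 ^ 2 + x 1 ^ 2 := by
    rw [dot3]; field_simp; ring
  unfold fdef
  simp only [hd1, hd2, e1, Real.sqrt_sq_eq_abs]
  set r := Real.sqrt (x 0 ^ 2 + x 1 ^ 2) with hr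
  have claim1 : ∀ s : ℝ, s ≠ 0 → h (![r, 0, x 2], s) = h (x, s) := by
    intro s hs
    by_cases hx : x 0 ^ 2 + x 1 ^ 2 = 0
    · have hx0 : x 0 = 0 := by nlinarith [sq_nonneg (x 0), sq_nonneg (x 1)]
      have hx1 : x 1 = 0 := by nlinarith [sq_nonneg (x 0), sq_nonneg (x 1)]
      have : (![r, 0, x 2] : V3) = x := by
        funext i; fin_cases i <;> simp [hr, hx, hx0, hx1]
      rw [this]
    · have hq : 0 < x 0 ^ 2 + x 1 ^ 2 := lt_of_le_of_ne (by positivity) (Ne.symm hx)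
      have hrpos : 0 < r := Real.sqrt_pos.2 hq
      have hr2 : r ^ 2 = x 0 ^ 2 + x 1 ^ 2 := Real.sq_sqrt hq.le
      have hAO : !![x 0 / r, x 1 / r; -(x 1) / r, x 0 / r] ∈ O2 := by
        refine O2_mem ?_ ?_ ?_ <;> field_simp <;>
          first
            | ring1
            | linear_combination hr2
            | linear_combination -hr2
            | linear_combination 2 * hr2
            | linear_combination (-2 : ℝ) * hr2
      have := hinv _ hAO (x, s) hs
      rw [KAct_explicit] at this
      have hvec : (![x 0 / r * x 0 + x 1 / r * x 1, -(x 1) / r * x 0 + x 0 / r * x 1,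
          (x 0 / r * (x 0 / r) - x 1 / r * (-(x 1) / r)) * x 2] : V3) = ![r, 0, x 2] := by
        funext i
        fin_cases i <;> simp <;> field_simp <;>
          first
            | ring1
            | linear_combination hr2
            | linear_combination -hr2
            | linear_combination x 2 * hr2
            | linear_combination -(x 2) * hr2
            | linear_combination (2 * x 2) * hr2
            | linear_combination (-2 * x 2) * hr2
            | linear_combination (1 + x 2) * hr2
            | linear_combination (-1 - x 2) * hr2
      have hdet1 : (x 0 / r * (x 0 / r) - x 1 / r * (-(x 1) / r)) * s = s := by
        field_simp
        first
          | linear_combination s * hr2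
          | linear_combination -s * hr2
          | linear_combination (2 * s) * hr2
          | linear_combination (-2 * s) * hr2
          | linear_combination -hr2
      rw [hvec, hdet1] at this
      exact this
  rcases ht.lt_or_gt with hneg | hpos
  · have hdiv : x 2 * t / |t| = -(x 2) := by
      rw [abs_of_neg hneg, div_neg, mul_div_assoc, div_self ht, mul_one]
    rw [hdiv, abs_of_neg hneg]
    have hBO : (!![1, 0; 0, -1] : Matrix (Fin 2) (Fin 2) ℝ) ∈ O2 := by
      refine O2_mem ?_ ?_ ?_ <;> norm_num
    have h1 := hinv _ hBO (![r, 0, x 2], t) ht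
    rw [KAct_explicit] at h1
    have hvec : (![1 * (![r, 0, x 2] : V3) 0 + 0 * (![r, 0, x 2] : V3) 1,
        0 * (![r, 0, x 2] : V3) 0 + -1 * (![r, 0, x 2] : V3) 1,
        (1 * -1 - 0 * 0) * (![r, 0, x 2] : V3) 2] : V3) = ![r, 0, -(x 2)] := by
      funext i; fin_cases i <;> simp
    have hdetn : (1 * -1 - 0 * 0 : ℝ) * t = -t := by ring
    rw [hvec, hdetn] at h1
    rw [h1]
    exact claim1 t ht
  · have hdiv : x 2 * t / |t| = x 2 := by
      rw [abs_of_pos hpos, mul_div_assoc, div_self ht, mul_one]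
    rw [hdiv, abs_of_pos hpos]
    exact claim1 t ht

lemma fdef_axis (h : V3 × ℝ → ℂ)
    (hinv : ∀ A ∈ O2, ∀ p : V3 × ℝ, p.2 ≠ 0 → h (KAct A p) = h p)
    (k : Mat3) (hk : k ∈ SO3) (x : V3) (t : ℝ) (ht : t ≠ 0) :
    fdef h (x, k.mulVec ![0, 0, t]) = h (kᵀ.mulVec x, t) := by
  have hT := transpose_so3 hk
  have h1 := fdef_inv h hT.1 x (k.mulVec ![0, 0, t])
  rw [← h1, ktk hk, fdef_restrict h hinv _ t ht]

section smooth

variable {E : Type*} [NormedAddCommGroup E] [NormedSpace ℝ E]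

lemma contDiff_dotc {g1 g2 : E → V3} (h1 : ContDiff ℝ (⊤ : ℕ∞) g1) (h2 : ContDiff ℝ (⊤ : ℕ∞) g2) :
    ContDiff ℝ (⊤ : ℕ∞) fun p => g1 p ⬝ᵥ g2 p := by
  simp only [dot3]
  exact (((contDiff_pi.1 h1 0).mul (contDiff_pi.1 h2 0)).add
    ((contDiff_pi.1 h1 1).mul (contDiff_pi.1 h2 1))).add
    ((contDiff_pi.1 h1 2).mul (contDiff_pi.1 h2 2))

lemma contDiff_cpc {g1 g2 : E → V3} (h1 : ContDiff ℝ (⊤ : ℕ∞) g1) (h2 : ContDiff ℝ (⊤ : ℕ∞) g2) :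
    ContDiff ℝ (⊤ : ℕ∞) fun p => cp (g1 p) (g2 p) := by
  rw [contDiff_pi]
  intro i
  fin_cases i <;>
    simp only [cp, Matrix.cons_val_zero, Matrix.cons_val_one, Matrix.head_cons,
      Matrix.cons_val_two, Matrix.tail_cons, Fin.zero_eta, Fin.mk_one] <;>
    exact ((contDiff_pi.1 h1 _).mul (contDiff_pi.1 h2 _)).sub
      ((contDiff_pi.1 h1 _).mul (contDiff_pi.1 h2 _))

end smooth

lemma fdef_smooth (h : V3 × ℝ → ℂ)
    (hsm : ContDiffOn ℝ (⊤ : ℕ∞) h {p : V3 × ℝ | p.2 ≠ 0})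
    (hinv : ∀ A ∈ O2, ∀ p : V3 × ℝ, p.2 ≠ 0 → h (KAct A p) = h p) :
    ContDiffOn ℝ (⊤ : ℕ∞) (fdef h) {p : V3 × V3 | p.2 ≠ 0} := by
  intro p₀ hp₀
  have hy0 : p₀.2 ≠ 0 := hp₀
  obtain ⟨a, ha⟩ := exists_axis hy0
  apply ContDiffAt.contDiffWithinAt
  set Gv : V3 × V3 → V3 := fun p =>
    ![(Real.sqrt (cp p.2 a ⬝ᵥ cp p.2 a))⁻¹ *
        ((Real.sqrt (p.2 ⬝ᵥ p.2))⁻¹ * (p.1 ⬝ᵥ cp (cp p.2 a) p.2)),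
      (Real.sqrt (cp p.2 a ⬝ᵥ cp p.2 a))⁻¹ * (p.1 ⬝ᵥ cp p.2 a),
      (Real.sqrt (p.2 ⬝ᵥ p.2))⁻¹ * (p.1 ⬝ᵥ p.2)] with hGv
  set F : V3 × V3 → ℂ := fun p => h (Gv p, Real.sqrt (p.2 ⬝ᵥ p.2)) with hF
  have hcy : ContDiff ℝ (⊤ : ℕ∞) fun p : V3 × V3 => cp p.2 a :=
    contDiff_cpc contDiff_snd contDiff_const
  have hU : IsOpen {p : V3 × V3 | cp p.2 a ≠ 0} :=
    isOpen_ne.preimage hcy.continuous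
  have hmem : p₀ ∈ {p : V3 × V3 | cp p.2 a ≠ 0} := ha
  have heq : ∀ p ∈ {p : V3 × V3 | cp p.2 a ≠ 0}, fdef h p = F p := by
    intro p hp
    obtain ⟨k, hk, hky, hkt⟩ := frame_data hp
    have hy : p.2 ≠ 0 := cp_ne_zero_imp hp
    have hn : (0 : ℝ) < Real.sqrt (p.2 ⬝ᵥ p.2) := Real.sqrt_pos.2 (dot_pos hy)
    have hp2 : fdef h p = fdef h (p.1, p.2) := rfl
    rw [hp2, ← hky, fdef_axis h hinv k hk p.1 _ hn.ne', hkt p.1]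
  -- smoothness of `F` at `p₀`
  have hyy : ContDiff ℝ (⊤ : ℕ∞) fun p : V3 × V3 => p.2 ⬝ᵥ p.2 :=
    contDiff_dotc contDiff_snd contDiff_snd
  have hcc : ContDiff ℝ (⊤ : ℕ∞) fun p : V3 × V3 => cp p.2 a ⬝ᵥ cp p.2 a := contDiff_dotc hcy hcy
  have hP : ContDiff ℝ (⊤ : ℕ∞) fun p : V3 × V3 => p.1 ⬝ᵥ cp (cp p.2 a) p.2 :=
    contDiff_dotc contDiff_fst (contDiff_cpc hcy contDiff_snd)
  have hQ : ContDiff ℝ (⊤ : ℕ∞) fun p : V3 × V3 => p.1 ⬝ᵥ cp p.2 a :=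
    contDiff_dotc contDiff_fst hcy
  have hR : ContDiff ℝ (⊤ : ℕ∞) fun p : V3 × V3 => p.1 ⬝ᵥ p.2 :=
    contDiff_dotc contDiff_fst contDiff_snd
  have hnpos : 0 < Real.sqrt (p₀.2 ⬝ᵥ p₀.2) := Real.sqrt_pos.2 (dot_pos hy0)
  have hspos : 0 < Real.sqrt (cp p₀.2 a ⬝ᵥ cp p₀.2 a) := Real.sqrt_pos.2 (dot_pos ha)
  have hnAt : ContDiffAt ℝ (⊤ : ℕ∞) (fun p : V3 × V3 => Real.sqrt (p.2 ⬝ᵥ p.2)) p₀ :=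
    (Real.contDiffAt_sqrt (dot_pos hy0).ne').comp p₀ hyy.contDiffAt
  have hnInv := hnAt.inv hnpos.ne'
  have hsAt : ContDiffAt ℝ (⊤ : ℕ∞) (fun p : V3 × V3 => Real.sqrt (cp p.2 a ⬝ᵥ cp p.2 a)) p₀ :=
    (Real.contDiffAt_sqrt (dot_pos ha).ne').comp p₀ hcc.contDiffAt
  have hsInv := hsAt.inv hspos.ne'
  have hGvec : ContDiffAt ℝ (⊤ : ℕ∞) Gv p₀ := by
    rw [hGv, contDiffAt_pi]
    intro i
    fin_cases i <;>
      simp only [Matrix.cons_val_zero, Matrix.cons_val_one, Matrix.head_cons,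
        Matrix.cons_val_two, Matrix.tail_cons, Fin.zero_eta, Fin.mk_one]
    · exact hsInv.mul (hnInv.mul hP.contDiffAt)
    · exact hsInv.mul hQ.contDiffAt
    · exact hnInv.mul hR.contDiffAt
  have hG : ContDiffAt ℝ (⊤ : ℕ∞) (fun p : V3 × V3 => (Gv p, Real.sqrt (p.2 ⬝ᵥ p.2))) p₀ :=
    hGvec.prodMk hnAt
  have hopen2 : IsOpen {q : V3 × ℝ | q.2 ≠ 0} := isOpen_ne.preimage continuous_snd
  have hmem2 : (Gv p₀, Real.sqrt (p₀.2 ⬝ᵥ p₀.2)) ∈ {q : V3 × ℝ | q.2 ≠ 0} := hnpos.ne'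
  have hhAt : ContDiffAt ℝ (⊤ : ℕ∞) h (Gv p₀, Real.sqrt (p₀.2 ⬝ᵥ p₀.2)) :=
    hsm.contDiffAt (hopen2.mem_nhds hmem2)
  have hFAt : ContDiffAt ℝ (⊤ : ℕ∞) F p₀ := by
    rw [hF]
    exact ContDiffAt.comp p₀ hhAt hG
  exact hFAt.congr_of_eventuallyEq (Filter.eventuallyEq_of_mem (hU.mem_nhds hmem) heq)

lemma exists_frame {y : V3} (hy : y ≠ 0) :
    ∃ k ∈ SO3, k.mulVec ![0, 0, Real.sqrt (y ⬝ᵥ y)] = y := by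
  obtain ⟨a, ha⟩ := exists_axis hy
  obtain ⟨k, hk, hky, -⟩ := frame_data ha
  exact ⟨k, hk, hky⟩

/-- Radialisation: a smooth `K'`-invariant function `h` on `ℝ³ × (ℝ∖{0})` extends uniquely to
a smooth `SO(3)`-invariant function `f` on `ℝ³ × (ℝ³∖{0})` with `f(x,(0,0,t)) = h(x,t)`;
explicitly `f(x, k(0,0,t)) = h(k⁻¹x, t)`. -/
theorem statement8 (h : V3 × ℝ → ℂ)
    (hsm : ContDiffOn ℝ (⊤ : ℕ∞) h {p : V3 × ℝ | p.2 ≠ 0})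
    (hinv : ∀ A ∈ O2, ∀ p : V3 × ℝ, p.2 ≠ 0 → h (KAct A p) = h p) :
    ∃ f : V3 × V3 → ℂ,
      (ContDiffOn ℝ (⊤ : ℕ∞) f {p : V3 × V3 | p.2 ≠ 0} ∧ InvOff f ∧ RestrictsTo f h) ∧
      (∀ k ∈ SO3, ∀ (x : V3) (t : ℝ), t ≠ 0 →
        f (x, k.mulVec ![0, 0, t]) = h (k.transpose.mulVec x, t)) ∧
      (∀ f' : V3 × V3 → ℂ,
        ContDiffOn ℝ (⊤ : ℕ∞) f' {p : V3 × V3 | p.2 ≠ 0} → InvOff f' → RestrictsTo f' h →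
        ∀ (x y : V3), y ≠ 0 → f' (x, y) = f (x, y)) := by
  refine ⟨fdef h, ⟨fdef_smooth h hsm hinv, ?_, ?_⟩, ?_, ?_⟩
  · intro k hk x y _
    exact fdef_inv h hk.1 x y
  · intro x t ht
    exact fdef_restrict h hinv x t ht
  · intro k hk x t ht
    exact fdef_axis h hinv k hk x t ht
  · intro f' hs' hi' hr' x y hy
    obtain ⟨k, hk, hky⟩ := exists_frame hy
    have hn : (0 : ℝ) < Real.sqrt (y ⬝ᵥ y) := Real.sqrt_pos.2 (dot_pos hy)
    have hkT := transpose_so3 hk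
    have e1 := hi' kᵀ hkT x y hy
    have e2 := fdef_inv h hkT.1 x y
    have hkty : kᵀ.mulVec y = ![0, 0, Real.sqrt (y ⬝ᵥ y)] := by
      conv_lhs => rw [← hky]
      rw [ktk hk]
    rw [← e1, ← e2, hkty, hr' _ _ hn.ne', fdef_restrict h hinv _ _ hn.ne']
end
end

section
/- If F is a Schwartz SO(3)-invariant function on ℝ³×ℝ³ such that ∫_{ℝ²} F(x,(y₁,y₂,t)) dy₁dy₂ = 0 for all x∈ℝ³ and t∈ℝ, then F = 0. (The Radon-type map R is injective on SO(3)-invariant Schwartz functions.) -/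
open MeasureTheory Complex Matrix

noncomputable section

/-- The Radon-type map: `RF(x,t) = ∫_{ℝ²} F(x, (y₁, y₂, t)) dy₁ dy₂`. -/
def RadonT (F : (Fin 3 → ℝ) × (Fin 3 → ℝ) → ℂ) (x : Fin 3 → ℝ) (t : ℝ) : ℂ :=
  ∫ w : ℝ × ℝ, F (x, ![w.1, w.2, t])

/-! For fixed `x`, Fubini turns the vanishing of `RF(x, ·)` into the vanishing of the Fourier
transform of the slice `y ↦ F(x, y)` along the line `ℝ e₃`. By `SO(3)`-invariance, the Fourier
transform of the `x`-slice at `k w` equals that of the `kᵀ x`-slice at `w`; since every vector is a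
rotation of a multiple of `e₃`, all slices have vanishing Fourier transform, and Fourier inversion
gives `F = 0`. -/

open FourierTransform

theorem integral_comp_mulVec_of_abs_det_eq_one {ι E : Type*} [Fintype ι] [DecidableEq ι]
    [NormedAddCommGroup E] [NormedSpace ℝ E] {M : Matrix ι ι ℝ} (hM : |M.det| = 1)
    (f : (ι → ℝ) → E) :
    ∫ v, f (M *ᵥ v) = ∫ v, f v := by
  have hdet : M.det ≠ 0 := by intro h; simp [h] at hM
  have hmp : MeasurePreserving (toLin' M) volume volume :=
    ⟨(toLin' M).continuous_of_finiteDimensional.measurable, by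
      rw [Real.map_matrix_volume_pi_eq_smul_volume_pi hdet, abs_inv, hM]; simp⟩
  have hemb : MeasurableEmbedding (toLin' M) :=
    (LinearMap.isClosedEmbedding_of_injective (LinearMap.ker_eq_bot.2
      (mulVec_injective_iff_isUnit.2 (M.isUnit_iff_isUnit_det.2 hdet.isUnit)))).measurableEmbedding
  exact hmp.integral_comp hemb f

section FourierPi

variable {ι : Type*} [Fintype ι] {E : Type*} [NormedAddCommGroup E] [NormedSpace ℂ E]

def fourierPi (f : (ι → ℝ) → E) (w : ι → ℝ) : E := ∫ v, 𝐞 (-(v ⬝ᵥ w)) • f v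

theorem integrable_fourierChar_dotProduct_smul {f : (ι → ℝ) → E} (hf : Integrable f)
    (w : ι → ℝ) : Integrable fun v ↦ 𝐞 (-(v ⬝ᵥ w)) • f v :=
  (VectorFourier.fourierIntegral_convergent_iff (L := dotProductBilin ℝ ℝ)
    Real.continuous_fourierChar (by simp only [dotProductBilin]; fun_prop) w).2 hf

theorem fourierPi_eq_fourier (f : (ι → ℝ) → E) (w : ι → ℝ) :
    fourierPi f w = 𝓕 (fun y : EuclideanSpace ℝ ι ↦ f y.ofLp) (WithLp.toLp 2 w) := by
  rw [Real.fourier_eq, fourierPi,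
    ← (EuclideanSpace.volume_preserving_symm_measurableEquiv_toLp ι).integral_comp']
  simp [EuclideanSpace.inner_eq_star_dotProduct, dotProduct_comm]

theorem eq_zero_of_fourierPi_eq_zero [CompleteSpace E] {f : (ι → ℝ) → E} (hc : Continuous f)
    (hi : Integrable f) (h : fourierPi f = 0) : f = 0 := by
  set g : EuclideanSpace ℝ ι → E := fun y ↦ f y.ofLp
  have hg : 𝓕 g = 0 := by
    ext ξ
    simpa [fourierPi_eq_fourier] using congrFun h ξ.ofLp
  have := Continuous.fourierInv_fourier_eq (f := g) (by fun_prop)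
    ((EuclideanSpace.volume_preserving_symm_measurableEquiv_toLp ι).integrable_comp_emb
      (MeasurableEquiv.measurableEmbedding _) |>.2 hi) (by simp [hg])
  ext v
  simpa [hg, g, Real.fourierInv_eq] using congrFun this.symm (WithLp.toLp 2 v)

theorem fourierPi_comp_mulVec [DecidableEq ι] {M : Matrix ι ι ℝ}
    (hM : M ∈ Matrix.orthogonalGroup ι ℝ) (f : (ι → ℝ) → E) (w : ι → ℝ) :
    fourierPi (fun v ↦ f (M *ᵥ v)) w = fourierPi f (M *ᵥ w) := by
  have hdet : |M.det| = 1 := by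
    have h := congrArg det ((mem_orthogonalGroup_iff _ _).1 hM)
    rw [det_mul, det_transpose, det_one, ← sq] at h
    rwa [← pow_eq_one_iff_of_nonneg (abs_nonneg _) two_ne_zero, sq_abs]
  have hdot (v : ι → ℝ) : M *ᵥ v ⬝ᵥ M *ᵥ w = v ⬝ᵥ w := by
    rw [dotProduct_mulVec, vecMul_mulVec, ← mulVec_transpose,
      (mem_orthogonalGroup_iff' _ _).1 hM, transpose_one, one_mulVec]
  rw [fourierPi, fourierPi,
    ← integral_comp_mulVec_of_abs_det_eq_one hdet (fun v ↦ 𝐞 (-(v ⬝ᵥ M *ᵥ w)) • f v)]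
  simp_rw [hdot]

end FourierPi

theorem integral_fin_three {E : Type*} [NormedAddCommGroup E] [NormedSpace ℝ E]
    {g : (Fin 3 → ℝ) → E} (hg : Integrable g) :
    ∫ v, g v = ∫ t, ∫ w : ℝ × ℝ, g ![w.1, w.2, t] := by
  let e := (MeasurableEquiv.piFinSuccAbove (fun _ : Fin 3 ↦ ℝ) 2).trans
    ((MeasurableEquiv.refl ℝ).prodCongr MeasurableEquiv.finTwoArrow)
  have he : MeasurePreserving e :=
    (volume_preserving_piFinSuccAbove (fun _ : Fin 3 ↦ ℝ) 2).trans
      ((MeasurePreserving.id volume).prod (volume_preserving_finTwoArrow ℝ))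
  have hsymm (t : ℝ) (w : ℝ × ℝ) : e.symm (t, w) = ![w.1, w.2, t] := by
    ext i; fin_cases i <;> rfl
  have hint : Integrable (fun p ↦ g (e.symm p)) (volume.prod volume) :=
    (he.symm.integrable_comp_emb e.symm.measurableEmbedding).2 hg
  rw [← he.symm.integral_comp', Measure.volume_eq_prod, integral_prod _ hint]
  simp only [hsymm]

theorem fourierPi_single_two {E : Type*} [NormedAddCommGroup E] [NormedSpace ℂ E]
    {g : (Fin 3 → ℝ) → E} (hg : Integrable g) (s : ℝ) :
    fourierPi g (Pi.single 2 s) = ∫ t, 𝐞 (-(t * s)) • ∫ w : ℝ × ℝ, g ![w.1, w.2, t] := by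
  rw [fourierPi, integral_fin_three (integrable_fourierChar_dotProduct_smul hg _)]
  simp [dotProduct_single, Circle.smul_def, integral_smul]

theorem SchwartzMap.integrable_comp_prodMk_left {D G V : Type*} [NormedAddCommGroup D]
    [NormedSpace ℝ D] [NormedAddCommGroup G] [NormedSpace ℝ G] [MeasurableSpace G] [BorelSpace G]
    [SecondCountableTopology G] [NormedAddCommGroup V] [NormedSpace ℝ V] {μ : Measure G}
    [μ.HasTemperateGrowth] (F : SchwartzMap (D × G) V) (x : D) :
    Integrable (fun y ↦ F (x, y)) μ := by
  have hmeas : AEStronglyMeasurable (fun y ↦ F (x, y)) μ :=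
    (F.continuous.comp (Continuous.prodMk_right x)).aestronglyMeasurable
  have hdecay (k : ℕ) (y : G) : ‖y‖ ^ k * ‖F (x, y)‖ ≤ SchwartzMap.seminorm ℝ k 0 F :=
    (mul_le_mul_of_nonneg_right (pow_le_pow_left₀ (norm_nonneg _) (norm_snd_le (x, y)) k)
      (norm_nonneg _)).trans (F.norm_pow_mul_le_seminorm ℝ k (x, y))
  simpa [integrable_norm_iff hmeas] using
    integrable_of_le_of_pow_mul_le (k := 0) (fun y ↦ F.norm_le_seminorm ℝ (x, y))
      (hdecay _) hmeas

theorem exists_mem_SO3_mulVec_single_eq (w : V3) :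
    ∃ k ∈ SO3, ∃ r : ℝ, k *ᵥ Pi.single 2 r = w := by
  obtain rfl | hw := eq_or_ne w 0
  · exact ⟨1, ⟨by simp, by simp⟩, 0, by simp⟩
  set r := ‖WithLp.toLp 2 w‖
  have hr : r ≠ 0 := by simpa [r] using hw
  obtain ⟨b, hb⟩ := Orthonormal.exists_orthonormalBasis_extension_of_card_eq (𝕜 := ℝ)
    (E := EuclideanSpace ℝ (Fin 3)) (v := fun _ : Fin 3 ↦ r⁻¹ • WithLp.toLp 2 w) (s := {2})
    (by simp) (by simp [r, norm_smul, hr])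
  set A := (EuclideanSpace.basisFun (Fin 3) ℝ).toBasis.toMatrix b
  have hA : A * Aᵀ = 1 :=
    (mem_orthogonalGroup_iff _ _).1 (OrthonormalBasis.toMatrix_orthonormalBasis_mem_orthogonal _ _)
  have hAw : A *ᵥ Pi.single 2 r = w := by
    ext i
    simp [A, Module.Basis.toMatrix_apply, hb 2 rfl]
    field_simp
  have hdet : A.det = 1 ∨ A.det = -1 := by
    simpa only [Module.Basis.det_apply] using
      (EuclideanSpace.basisFun (Fin 3) ℝ).det_to_matrix_orthonormalBasis_real b
  rcases hdet with hdet | hdet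
  · exact ⟨A, ⟨hA, hdet⟩, r, hAw⟩
  -- in odd dimension, negating an orthogonal matrix flips the sign of its determinant
  · refine ⟨-A, ⟨by simpa using hA, by rw [det_neg, hdet]; norm_num⟩, -r, ?_⟩
    rw [neg_mulVec, Pi.single_neg, mulVec_neg, neg_neg, hAw]

theorem Inv3.apply_mulVec_right {F : V3 × V3 → ℂ} (hF : Inv3 F) {k : Mat3} (hk : k ∈ SO3)
    (x v : V3) : F (x, k *ᵥ v) = F (kᵀ *ᵥ x, v) := by
  simpa [mulVec_mulVec, hk.1] using hF k hk (kᵀ *ᵥ x) v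

/-- The Radon-type map `R` is injective on `SO(3)`-invariant Schwartz functions. -/
theorem statement9 (F : SchwartzMap (V3 × V3) ℂ) (hF : Inv3 ⇑F)
    (hR : ∀ (x : V3) (t : ℝ), RadonT ⇑F x t = 0) :
    F = 0 := by
  have hslice (x w : V3) : fourierPi (fun v ↦ F (x, v)) w = 0 := by
    obtain ⟨k, hk, r, rfl⟩ := exists_mem_SO3_mulVec_single_eq w
    rw [← fourierPi_comp_mulVec ((mem_orthogonalGroup_iff _ _).2 hk.1)]
    simp_rw [hF.apply_mulVec_right hk]
    rw [fourierPi_single_two (F.integrable_comp_prodMk_left _)]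
    have hRk (t : ℝ) : ∫ w : ℝ × ℝ, F (kᵀ *ᵥ x, ![w.1, w.2, t]) = 0 := hR _ t
    simp [hRk]
  ext ⟨x, y⟩
  exact congrFun (eq_zero_of_fourierPi_eq_zero (by fun_prop) (F.integrable_comp_prodMk_left x)
    (funext (hslice x))) y
end
end

section
/- The Radon-type map R, defined by RF(x,t) = ∫_{ℝ²} F(x,(y₁,y₂,t)) dy₁dy₂, is a continuous linear map from 𝒮(ℝ³×ℝ³) to 𝒮(ℝ³×ℝ); moreover, if F is SO(3)-invariant then RF is K'-invariant. -/
open MeasureTheory Complex Matrix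

noncomputable section

/-!
Integrating out two variables is, on the Fourier side, restriction to the subspace where the
dual variables vanish (Fourier slice theorem). Hence, after linear changes of coordinates, `R` is
`𝓕⁻¹ ∘ restriction ∘ 𝓕`, a composition of continuous linear maps of Schwartz spaces; the
identification with the integral is Fourier inversion for the continuous integrable function
`RF`. For `K'`-invariance, `A ∈ O(2)` acts as `diag(A, det A) ∈ SO(3)`, and the substitution
`y ↦ A y` in the integral preserves Lebesgue measure.
-/

open scoped FourierTransform RealInnerProductSpace SchwartzMap

section FourierSlice

variable {U V E : Type*}
  [NormedAddCommGroup U] [InnerProductSpace ℝ U] [FiniteDimensional ℝ U]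
  [MeasurableSpace U] [BorelSpace U]
  [NormedAddCommGroup V] [InnerProductSpace ℝ V] [FiniteDimensional ℝ V]
  [MeasurableSpace V] [BorelSpace V]
  [NormedAddCommGroup E] [NormedSpace ℂ E]

theorem fourier_integral_toLp_snd {f : WithLp 2 (U × V) → E} (hf : Integrable f) (ξ : U) :
    𝓕 (fun u => ∫ v, f (WithLp.toLp 2 (u, v))) ξ = 𝓕 f (WithLp.toLp 2 (ξ, 0)) := by
  have hmp := WithLp.volume_preserving_toLp U V
  have hemb := (MeasurableEquiv.toLp 2 (U × V)).measurableEmbedding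
  have hint : Integrable fun p : U × V => 𝐞 (-⟪p.1, ξ⟫) • f (WithLp.toLp 2 p) := by
    have := (hmp.integrable_comp_emb hemb).2
      ((Real.fourierIntegral_convergent_iff (WithLp.toLp 2 (ξ, (0 : V)))).2 hf)
    simpa [Function.comp_def, WithLp.prod_inner_apply] using this
  calc 𝓕 (fun u => ∫ v, f (WithLp.toLp 2 (u, v))) ξ
      = ∫ u, ∫ v, 𝐞 (-⟪u, ξ⟫) • f (WithLp.toLp 2 (u, v)) := by
        simp only [Real.fourier_eq, Circle.smul_def, integral_smul]
    _ = ∫ p : U × V, 𝐞 (-⟪p.1, ξ⟫) • f (WithLp.toLp 2 p) := (integral_prod _ hint).symm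
    _ = 𝓕 f (WithLp.toLp 2 (ξ, 0)) := by
        rw [Real.fourier_eq, ← hmp.integral_comp hemb]
        simp [WithLp.prod_inner_apply]

end FourierSlice

namespace SchwartzMap

theorem exists_norm_le_mul_one_add_norm_rpow_neg {D F : Type*} [NormedAddCommGroup D]
    [NormedSpace ℝ D] [NormedAddCommGroup F] [NormedSpace ℝ F] (f : 𝓢(D, F)) (k : ℕ) :
    ∃ C, 0 ≤ C ∧ ∀ x, ‖f x‖ ≤ C * (1 + ‖x‖) ^ (-(k : ℝ)) := by
  refine ⟨2 ^ k * (Finset.Iic (k, 0)).sup (fun m => SchwartzMap.seminorm ℝ m.1 m.2) f,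
    by positivity, fun x => ?_⟩
  have h := one_add_le_sup_seminorm_apply (𝕜 := ℝ) (m := (k, 0)) le_rfl le_rfl f x
  rw [norm_iteratedFDeriv_zero] at h
  rw [Real.rpow_neg (by positivity), Real.rpow_natCast, ← div_eq_mul_inv,
    le_div_iff₀ (by positivity), mul_comm]
  exact h

variable {U V E : Type*} [NormedAddCommGroup U] [InnerProductSpace ℝ U]
  [NormedAddCommGroup V] [InnerProductSpace ℝ V] [FiniteDimensional ℝ V]
  [MeasurableSpace V] [BorelSpace V] [NormedAddCommGroup E] [NormedSpace ℂ E]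

theorem continuous_integral_toLp_snd (f : 𝓢(WithLp 2 (U × V), E)) :
    Continuous fun u : U => ∫ v, f (WithLp.toLp 2 (u, v)) := by
  obtain ⟨C, hC, hf⟩ := f.exists_norm_le_mul_one_add_norm_rpow_neg (Module.finrank ℝ V + 1)
  have hcont : Continuous fun p : U × V => f (WithLp.toLp 2 p) :=
    f.continuous.comp (WithLp.prod_continuous_toLp 2 U V)
  refine continuous_of_dominated (fun u => ?_) (fun u => ae_of_all _ fun v => ?_)
    ((integrable_one_add_norm (E := V) (r := (Module.finrank ℝ V + 1 : ℕ))
      (by push_cast; linarith)).const_mul C)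
    (ae_of_all _ fun v => hcont.comp (Continuous.prodMk_left v))
  · exact (hcont.comp (Continuous.prodMk_right u)).aestronglyMeasurable
  · refine (hf _).trans (mul_le_mul_of_nonneg_left ?_ hC)
    refine Real.rpow_le_rpow_of_nonpos (by positivity) ?_ (by push_cast; linarith)
    simpa using WithLp.norm_snd_le U (WithLp.toLp 2 (u, v))

variable (U V E)

def sliceCLM : 𝓢(WithLp 2 (U × V), E) →L[ℝ] 𝓢(U, E) :=
  compCLM ℝ ((WithLp.prodContinuousLinearEquiv 2 ℝ U V).symm.toContinuousLinearMap ∘L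
    ContinuousLinearMap.inl ℝ U V).hasTemperateGrowth ⟨1, 1, fun u => by simp⟩

variable [FiniteDimensional ℝ U] [MeasurableSpace U] [BorelSpace U]

def integralSndCLM : 𝓢(WithLp 2 (U × V), E) →L[ℝ] 𝓢(U, E) :=
  FourierTransform.fourierInvCLM ℝ 𝓢(U, E) ∘L sliceCLM U V E ∘L
    FourierTransform.fourierCLM ℝ 𝓢(WithLp 2 (U × V), E)

variable {U V E} [CompleteSpace E]

theorem integralSndCLM_apply (f : 𝓢(WithLp 2 (U × V), E)) (u : U) :
    integralSndCLM U V E f u = ∫ v, f (WithLp.toLp 2 (u, v)) := by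
  have hint : Integrable fun u : U => ∫ v, f (WithLp.toLp 2 (u, v)) :=
    ((WithLp.volume_preserving_toLp U V).integrable_comp_emb
      (MeasurableEquiv.toLp 2 (U × V)).measurableEmbedding |>.2 f.integrable).integral_prod_left
  have hfourier : 𝓕 (fun u : U => ∫ v, f (WithLp.toLp 2 (u, v))) = sliceCLM U V E (𝓕 f) :=
    funext (fourier_integral_toLp_snd f.integrable)
  have hinv :
      ⇑(integralSndCLM U V E f) = 𝓕⁻ (𝓕 fun u : U => ∫ v, f (WithLp.toLp 2 (u, v))) := by
    rw [hfourier]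
    exact fourierInv_coe _
  rw [hinv, (continuous_integral_toLp_snd f).fourierInv_fourier_eq hint
    (hfourier ▸ (sliceCLM U V E (𝓕 f)).integrable)]

end SchwartzMap

theorem integral_comp_mulVec_of_mul_transpose_eq_one {ι E : Type*} [Fintype ι] [DecidableEq ι]
    [NormedAddCommGroup E] [NormedSpace ℝ E] {A : Matrix ι ι ℝ} (hA : A * Aᵀ = 1)
    (g : (ι → ℝ) → E) : ∫ y, g (A *ᵥ y) = ∫ y, g y := by
  let e := (Matrix.toLin'OfInv (mul_eq_one_comm.mp hA) hA).toContinuousLinearEquiv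
  have hdet : |A.det| = 1 := by
    have h : |A.det| * |A.det| = 1 := by
      simpa [abs_mul_abs_self, det_transpose] using congrArg det hA
    nlinarith [abs_nonneg A.det]
  have hmp : MeasurePreserving e := by
    refine ⟨e.continuous.measurable, ?_⟩
    change Measure.map (toLin' A) volume = volume
    rw [Real.map_matrix_volume_pi_eq_smul_volume_pi (fun h => by simp [h] at hdet), abs_inv, hdet]
    simp
  exact hmp.integral_comp e.toHomeomorph.measurableEmbedding g

def radonCoordEquiv : (((Fin 3 → ℝ) × ℝ) × (Fin 2 → ℝ)) ≃L[ℝ] ((Fin 3 → ℝ) × (Fin 3 → ℝ)) :=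
  LinearEquiv.toContinuousLinearEquiv
    { toFun p := (p.1.1, ![p.2 0, p.2 1, p.1.2])
      invFun q := ((q.1, q.2 2), ![q.2 0, q.2 1])
      map_add' p p' := by ext i <;> fin_cases i <;> rfl
      map_smul' c p := by ext i <;> fin_cases i <;> rfl
      left_inv p := Prod.ext rfl (by ext i; fin_cases i <;> rfl)
      right_inv q := by ext i <;> fin_cases i <;> rfl }

theorem radonT_eq_integral_pi (F : V3 × V3 → ℂ) (x : Fin 3 → ℝ) (t : ℝ) :
    RadonT F x t = ∫ y : Fin 2 → ℝ, F (radonCoordEquiv ((x, t), y)) :=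
  ((volume_preserving_finTwoArrow ℝ).integral_comp' fun w => F (x, ![w.1, w.2, t])).symm

-- The Fourier transform lives on inner product spaces, hence the Euclidean and `WithLp 2`
-- coordinates.
def radonBaseEquiv : ((Fin 3 → ℝ) × ℝ) ≃L[ℝ] WithLp 2 (EuclideanSpace ℝ (Fin 3) × ℝ) :=
  ((EuclideanSpace.equiv (Fin 3) ℝ).symm.prodCongr (ContinuousLinearEquiv.refl ℝ ℝ)).trans
    (WithLp.prodContinuousLinearEquiv 2 ℝ _ _).symm

def radonFiberEquiv :
    WithLp 2 (WithLp 2 (EuclideanSpace ℝ (Fin 3) × ℝ) × EuclideanSpace ℝ (Fin 2)) ≃L[ℝ]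
      ((Fin 3 → ℝ) × (Fin 3 → ℝ)) :=
  (WithLp.prodContinuousLinearEquiv 2 ℝ _ _).trans
    ((radonBaseEquiv.symm.prodCongr (EuclideanSpace.equiv (Fin 2) ℝ)).trans radonCoordEquiv)

def radonCLM : 𝓢(V3 × V3, ℂ) →L[ℝ] 𝓢((Fin 3 → ℝ) × ℝ, ℂ) :=
  SchwartzMap.compCLMOfContinuousLinearEquiv ℝ radonBaseEquiv ∘L
    SchwartzMap.integralSndCLM _ _ ℂ ∘L SchwartzMap.compCLMOfContinuousLinearEquiv ℝ radonFiberEquiv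

theorem radonCLM_apply (F : 𝓢(V3 × V3, ℂ)) (p : (Fin 3 → ℝ) × ℝ) :
    radonCLM F p = RadonT F p.1 p.2 := by
  rw [radonT_eq_integral_pi, ← (EuclideanSpace.volume_preserving_symm_measurableEquiv_toLp
    (Fin 2)).integral_comp' fun y => F (radonCoordEquiv (p, y))]
  exact SchwartzMap.integralSndCLM_apply _ _

def blockDiagDet (A : Matrix (Fin 2) (Fin 2) ℝ) : Mat3 :=
  Matrix.of ![![A 0 0, A 0 1, 0], ![A 1 0, A 1 1, 0], ![0, 0, A.det]]

theorem blockDiagDet_mulVec (A : Matrix (Fin 2) (Fin 2) ℝ) (x : V3) :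
    blockDiagDet A *ᵥ x = ![(A *ᵥ ![x 0, x 1]) 0, (A *ᵥ ![x 0, x 1]) 1, A.det * x 2] := by
  ext i
  fin_cases i <;> simp [blockDiagDet, mulVec, dotProduct, Fin.sum_univ_three, Fin.sum_univ_two]

theorem blockDiagDet_mem_SO3 {A : Matrix (Fin 2) (Fin 2) ℝ} (hA : A * Aᵀ = 1) :
    blockDiagDet A ∈ SO3 := by
  have hdet : A.det * A.det = 1 := by simpa [det_transpose] using congrArg det hA
  have hA' := fun i j => congrFun (congrFun hA i) j
  simp only [mul_apply, Fin.sum_univ_two, transpose_apply] at hA'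
  refine ⟨?_, ?_⟩
  · ext i j
    fin_cases i <;> fin_cases j <;> simp [blockDiagDet, mul_apply, Fin.sum_univ_three, hdet, hA']
  · calc (blockDiagDet A).det = A.det * A.det := by
          simp only [det_fin_three, det_fin_two, blockDiagDet, of_apply, cons_val', cons_val_zero,
            cons_val_fin_one, cons_val_one, cons_val, mul_zero, sub_zero, add_zero, zero_mul]
          ring
      _ = 1 := hdet

theorem radonCoordEquiv_kAct (A : Matrix (Fin 2) (Fin 2) ℝ) (p : (Fin 3 → ℝ) × ℝ)
    (y : Fin 2 → ℝ) :
    radonCoordEquiv (KAct A p, A *ᵥ y) = (blockDiagDet A *ᵥ (radonCoordEquiv (p, y)).1,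
      blockDiagDet A *ᵥ (radonCoordEquiv (p, y)).2) := by
  have hy : ![y 0, y 1] = y := by ext i; fin_cases i <;> rfl
  simp [radonCoordEquiv, KAct, blockDiagDet_mulVec, hy]

theorem radonT_kAct {F : V3 × V3 → ℂ} (hF : Inv3 F) {A : Matrix (Fin 2) (Fin 2) ℝ} (hA : A ∈ O2)
    (p : (Fin 3 → ℝ) × ℝ) : RadonT F (KAct A p).1 (KAct A p).2 = RadonT F p.1 p.2 := by
  rw [radonT_eq_integral_pi, radonT_eq_integral_pi,
    ← integral_comp_mulVec_of_mul_transpose_eq_one hA]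
  refine integral_congr_ae (ae_of_all _ fun y => ?_)
  simp only [Prod.mk.eta, radonCoordEquiv_kAct]
  exact hF _ (blockDiagDet_mem_SO3 hA) _ _

/-- The Radon-type map `R` is a continuous linear map `𝒮(ℝ³×ℝ³) → 𝒮(ℝ³×ℝ)` sending
`SO(3)`-invariant functions to `K'`-invariant functions. -/
theorem statement10 :
    ∃ T : SchwartzMap (V3 × V3) ℂ →L[ℝ] SchwartzMap ((Fin 3 → ℝ) × ℝ) ℂ,
      (∀ (F : SchwartzMap (V3 × V3) ℂ) (x : V3) (t : ℝ), T F (x, t) = RadonT ⇑F x t) ∧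
      (∀ F : SchwartzMap (V3 × V3) ℂ, Inv3 ⇑F → InvK' ⇑(T F)) := by
  refine ⟨radonCLM, fun F x t => radonCLM_apply F (x, t), fun F hF A hA p => ?_⟩
  rw [radonCLM_apply, radonCLM_apply, radonT_kAct hF hA]
end
end

section
/- The real polynomials |x|², t², x₃·t, and x₃² generate, as an ℝ-algebra, the algebra of all real polynomial functions on ℝ³×ℝ that are invariant under the O(2)-action A·(x₁,x₂,x₃,t) = (A(x₁,x₂), (det A)x₃, (det A)t). (This gives the Hilbert basis ρ'(x,t) = (|x|², t², x₃t, x₃²) for (𝒩',K').) -/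
open MeasureTheory Complex Matrix

noncomputable section

/-- `P` is a (real) polynomial function on `ℝ³ × ℝ`. -/
def IsPolyFun4 (P : (Fin 3 → ℝ) × ℝ → ℝ) : Prop :=
  ∃ Q : MvPolynomial (Fin 4) ℝ, ∀ p : (Fin 3 → ℝ) × ℝ,
    P p = MvPolynomial.eval ![p.1 0, p.1 1, p.1 2, p.2] Q

/-!
Rotations act transitively on the circles of the `(x₁, x₂)`-plane, so an invariant polynomial `P`
satisfies `P(x, t) = G(√(x₁² + x₂²), x₃, t)`, where `G(y, u, v) = P(y, 0, u, v)`. The rotation by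
`π` and the reflection `(x₁, x₂) ↦ (x₁, -x₂)`, whose determinant is `-1`, act on this slice by
`y ↦ -y` and by `(u, v) ↦ (-u, -v)`. Hence `G` only has monomials `y^a u^b v^c` with `a` and
`b + c` even, i.e. `G` is a polynomial in `y², u², uv, v²`, and substituting
`y² = |x|² - x₃²` writes `P` in the four generators.
-/

open MvPolynomial

theorem pow_mul_pow_eq_of_even_add {M : Type*} [CommMonoid M] (u v : M) {a b : ℕ}
    (h : Even (a + b)) :
    u ^ a * v ^ b = (u ^ 2) ^ (a / 2) * (u * v) ^ (a % 2) * (v ^ 2) ^ (b / 2) := by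
  have hab : b % 2 = a % 2 := by rcases h with ⟨k, hk⟩; omega
  conv_lhs => rw [← Nat.div_add_mod a 2, ← Nat.div_add_mod b 2, hab]
  simp only [pow_add, mul_pow, ← pow_mul, mul_comm 2]
  ac_rfl

namespace MvPolynomial

theorem eval_aeval {σ τ R : Type*} [CommSemiring R] (g : σ → MvPolynomial τ R)
    (F : MvPolynomial σ R) (x : τ → R) : eval x (aeval g F) = eval (fun i => eval x (g i)) F :=
  comp_aeval_apply g (aeval x) F

theorem aeval_apply_eq_eval {σ X R : Type*} [CommSemiring R] (f : σ → X → R)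
    (H : MvPolynomial σ R) (p : X) : aeval f H p = eval (fun i => f i p) H :=
  comp_aeval_apply f (Pi.evalAlgHom R (fun _ => R) p) H

theorem coeff_eq_zero_of_eval_mul_eq {σ K : Type*} [Fintype σ] [Field K] [CharZero K]
    {G : MvPolynomial σ K} {ε : σ → K} (h : ∀ x, eval (ε * x) G = eval x G)
    {m : σ →₀ ℕ} (hm : ∏ i, ε i ^ m i = -1) : coeff m G = 0 := by
  -- `Gε` evaluates like `G ∘ (ε * ·)`, hence equals `G`; its `m`-th coefficient is `-coeff m G`.
  set Gε := ∑ n ∈ G.support, monomial n ((∏ i, ε i ^ n i) * coeff n G)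
  have hGε : Gε = G := by
    refine MvPolynomial.funext fun x => ?_
    rw [← h, map_sum, eval_eq']
    refine Finset.sum_congr rfl fun n _ => ?_
    simp only [eval_monomial, Finsupp.prod_fintype _ _ (fun i => pow_zero _), Pi.mul_apply,
      mul_pow, Finset.prod_mul_distrib]
    ring
  have hcoeff : coeff m Gε = (∏ i, ε i ^ m i) * coeff m G := by
    classical
    simp only [Gε, coeff_sum, coeff_monomial, Finset.sum_ite_eq', mem_support_iff]
    split_ifs <;> simp_all
  rw [hGε, hm] at hcoeff
  linear_combination hcoeff / 2

theorem exists_eval_eq_eval_sq_of_coeff {R : Type*} [CommSemiring R] (G : MvPolynomial (Fin 3) R)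
    (h₀ : ∀ m : Fin 3 →₀ ℕ, Odd (m 0) → coeff m G = 0)
    (h₁₂ : ∀ m : Fin 3 →₀ ℕ, Odd (m 1 + m 2) → coeff m G = 0) :
    ∃ H : MvPolynomial (Fin 4) R, ∀ y u v : R,
      eval ![y, u, v] G = eval ![y ^ 2, u ^ 2, u * v, v ^ 2] H := by
  refine ⟨∑ m ∈ G.support, monomial
      (Finsupp.equivFunOnFinite.symm ![m 0 / 2, m 1 / 2, m 1 % 2, m 2 / 2]) (coeff m G),
    fun y u v => ?_⟩
  rw [map_sum, eval_eq']
  refine Finset.sum_congr rfl fun m _ => ?_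
  simp only [eval_monomial, Finsupp.prod_fintype _ _ (fun i => pow_zero _),
    Finsupp.coe_equivFunOnFinite_symm, Fin.prod_univ_three, Fin.prod_univ_four,
    Matrix.cons_val_zero, Matrix.cons_val_one, Matrix.cons_val_two, Matrix.cons_val_three,
    Matrix.head_cons, Matrix.tail_cons]
  by_cases hm : coeff m G = 0
  · simp [hm]
  have hm₀ : Even (m 0) := Nat.not_odd_iff_even.mp fun h => hm (h₀ m h)
  have hm₁₂ : Even (m 1 + m 2) := Nat.not_odd_iff_even.mp fun h => hm (h₁₂ m h)
  rw [mul_assoc, pow_mul_pow_eq_of_even_add u v hm₁₂, ← pow_mul y,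
    Nat.mul_div_cancel' hm₀.two_dvd]
  ring

theorem exists_eval_eq_eval_sq_of_eval_neg {K : Type*} [Field K] [CharZero K]
    (G : MvPolynomial (Fin 3) K)
    (h₀ : ∀ y u v : K, eval ![-y, u, v] G = eval ![y, u, v] G)
    (h₁₂ : ∀ y u v : K, eval ![y, -u, -v] G = eval ![y, u, v] G) :
    ∃ H : MvPolynomial (Fin 4) K, ∀ y u v : K,
      eval ![y, u, v] G = eval ![y ^ 2, u ^ 2, u * v, v ^ 2] H := by
  have eta (x : Fin 3 → K) : x = ![x 0, x 1, x 2] := by ext i; fin_cases i <;> rfl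
  refine exists_eval_eq_eval_sq_of_coeff G (fun m hm => ?_) (fun m hm => ?_)
  · refine coeff_eq_zero_of_eval_mul_eq (ε := ![-1, 1, 1]) (fun x => ?_) ?_
    · rw [eta x, ← h₀]
      refine congrArg (eval · G) ?_
      ext i; fin_cases i <;> simp
    · simp [Fin.prod_univ_three, hm.neg_one_pow]
  · refine coeff_eq_zero_of_eval_mul_eq (ε := ![1, -1, -1]) (fun x => ?_) ?_
    · rw [eta x, ← h₁₂]
      refine congrArg (eval · G) ?_
      ext i; fin_cases i <;> simp
    · simp [Fin.prod_univ_three, ← pow_add, hm.neg_one_pow]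

end MvPolynomial

theorem det_mul_self_of_mem_O2 {A : Matrix (Fin 2) (Fin 2) ℝ} (hA : A ∈ O2) :
    A.det * A.det = 1 := by
  simpa [Matrix.det_mul, Matrix.det_transpose] using congrArg Matrix.det hA

theorem mulVec_sq_add_sq_of_mem_O2 {A : Matrix (Fin 2) (Fin 2) ℝ} (hA : A ∈ O2)
    (v : Fin 2 → ℝ) : (A *ᵥ v) 0 ^ 2 + (A *ᵥ v) 1 ^ 2 = v 0 ^ 2 + v 1 ^ 2 := by
  have hAA : Aᵀ * A = 1 := mul_eq_one_comm.mp hA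
  have : (A *ᵥ v) ⬝ᵥ (A *ᵥ v) = v ⬝ᵥ v := by
    rw [dotProduct_mulVec, ← mulVec_transpose, mulVec_mulVec, hAA, one_mulVec]
  simpa [dotProduct, Fin.sum_univ_two, sq] using this

theorem mem_O2_fin_two_of {a b c d : ℝ} (h₁ : a ^ 2 + b ^ 2 = 1) (h₂ : a * c + b * d = 0)
    (h₃ : c ^ 2 + d ^ 2 = 1) : !![a, b; c, d] ∈ O2 := by
  simp only [O2, Set.mem_ofPred_eq, ← Matrix.ext_iff, Fin.forall_fin_two]
  simp [Matrix.mul_apply, Fin.sum_univ_two]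
  refine ⟨⟨?_, h₂⟩, ?_, ?_⟩ <;> linarith

theorem KAct_fin_two_of (a b c d x y z t : ℝ) :
    KAct !![a, b; c, d] (![x, y, z], t) =
      (![a * x + b * y, c * x + d * y, (a * d - b * c) * z], (a * d - b * c) * t) := by
  simp [KAct, Matrix.det_fin_two_of, mul_comm]

def IsO2Invariant (P : (Fin 3 → ℝ) × ℝ → ℝ) : Prop :=
  ∀ A ∈ O2, ∀ p, P (KAct A p) = P p

namespace IsO2Invariant

variable {P : (Fin 3 → ℝ) × ℝ → ℝ}

theorem apply_neg_neg (hP : IsO2Invariant P) (x y z t : ℝ) :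
    P (![-x, -y, z], t) = P (![x, y, z], t) := by
  simpa [KAct_fin_two_of] using
    hP !![-1, 0; 0, -1] (mem_O2_fin_two_of (by norm_num) (by norm_num) (by norm_num)) (![x, y, z], t)

theorem apply_reflect (hP : IsO2Invariant P) (x y z t : ℝ) :
    P (![x, -y, -z], -t) = P (![x, y, z], t) := by
  simpa [KAct_fin_two_of] using
    hP !![1, 0; 0, -1] (mem_O2_fin_two_of (by norm_num) (by norm_num) (by norm_num)) (![x, y, z], t)

theorem apply_eq_apply_sqrt (hP : IsO2Invariant P) (x y z t : ℝ) :
    P (![x, y, z], t) = P (![√(x ^ 2 + y ^ 2), 0, z], t) := by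
  set r := √(x ^ 2 + y ^ 2)
  have hr : r ^ 2 = x ^ 2 + y ^ 2 := Real.sq_sqrt (by positivity)
  rcases eq_or_ne r 0 with hr0 | hr0
  · have hx : x = 0 := by nlinarith
    have hy : y = 0 := by nlinarith
    simp [hr0, hx, hy]
  have hrot : KAct !![x / r, y / r; -y / r, x / r] (![x, y, z], t) = (![r, 0, z], t) := by
    have hdet : x / r * (x / r) - y / r * (-y / r) = 1 := by field_simp; linarith
    rw [KAct_fin_two_of, hdet, one_mul, one_mul]
    congr 1
    ext i; fin_cases i <;> simp <;> field_simp <;> linarith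
  rw [← hrot, hP]
  apply mem_O2_fin_two_of <;> field_simp <;> linarith

end IsO2Invariant

def invariantGenerators : Set ((Fin 3 → ℝ) × ℝ → ℝ) :=
  {fun p => p.1 0 ^ 2 + p.1 1 ^ 2 + p.1 2 ^ 2,
    fun p => p.2 ^ 2,
    fun p => p.1 2 * p.2,
    fun p => p.1 2 ^ 2}

def invariantPolyFuns : Subalgebra ℝ ((Fin 3 → ℝ) × ℝ → ℝ) where
  carrier := {P | IsPolyFun4 P ∧ IsO2Invariant P}
  mul_mem' := by
    rintro P Q ⟨⟨F, hF⟩, hP⟩ ⟨⟨G, hG⟩, hQ⟩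
    exact ⟨⟨F * G, fun p => by simp [hF, hG]⟩, fun A hA p => by simp [hP A hA p, hQ A hA p]⟩
  add_mem' := by
    rintro P Q ⟨⟨F, hF⟩, hP⟩ ⟨⟨G, hG⟩, hQ⟩
    exact ⟨⟨F + G, fun p => by simp [hF, hG]⟩, fun A hA p => by simp [hP A hA p, hQ A hA p]⟩
  algebraMap_mem' r := ⟨⟨C r, fun p => by simp⟩, fun A hA p => rfl⟩

theorem invariantGenerators_subset : invariantGenerators ⊆ invariantPolyFuns := by
  rintro g (rfl | rfl | rfl | rfl)
  · refine ⟨⟨X 0 ^ 2 + X 1 ^ 2 + X 2 ^ 2, fun p => by simp⟩, fun A hA p => ?_⟩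
    have := mulVec_sq_add_sq_of_mem_O2 hA ![p.1 0, p.1 1]
    simp only [KAct, Matrix.cons_val_zero, Matrix.cons_val_one, Matrix.cons_val_two,
      Matrix.head_cons, Matrix.tail_cons] at this ⊢
    linear_combination this + p.1 2 ^ 2 * det_mul_self_of_mem_O2 hA
  · refine ⟨⟨X 3 ^ 2, fun p => by simp⟩, fun A hA p => ?_⟩
    simp only [KAct]
    linear_combination p.2 ^ 2 * det_mul_self_of_mem_O2 hA
  · refine ⟨⟨X 2 * X 3, fun p => by simp⟩, fun A hA p => ?_⟩
    simp only [KAct, Matrix.cons_val_two, Matrix.head_cons, Matrix.tail_cons]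
    linear_combination p.1 2 * p.2 * det_mul_self_of_mem_O2 hA
  · refine ⟨⟨X 2 ^ 2, fun p => by simp⟩, fun A hA p => ?_⟩
    simp only [KAct, Matrix.cons_val_two, Matrix.head_cons, Matrix.tail_cons]
    linear_combination p.1 2 ^ 2 * det_mul_self_of_mem_O2 hA

theorem mem_adjoin_of_isO2Invariant {P : (Fin 3 → ℝ) × ℝ → ℝ} (hpoly : IsPolyFun4 P)
    (hP : IsO2Invariant P) : P ∈ Algebra.adjoin ℝ invariantGenerators := by
  obtain ⟨F, hF⟩ := hpoly
  set G : MvPolynomial (Fin 3) ℝ := aeval ![X 0, 0, X 1, X 2] F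
  have hG (y u v : ℝ) : eval ![y, u, v] G = P (![y, 0, u], v) := by
    rw [hF, eval_aeval]
    refine congrArg (eval · F) ?_
    funext i; fin_cases i <;> simp
  obtain ⟨H, hH⟩ := exists_eval_eq_eval_sq_of_eval_neg G
    (fun y u v => by simpa [hG] using hP.apply_neg_neg y 0 u v)
    (fun y u v => by simpa [hG] using hP.apply_reflect y 0 u v)
  set q : Fin 4 → (Fin 3 → ℝ) × ℝ → ℝ :=
    ![fun p => p.1 0 ^ 2 + p.1 1 ^ 2, fun p => p.1 2 ^ 2, fun p => p.1 2 * p.2, fun p => p.2 ^ 2]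
  have hPH : P = aeval q H := by
    funext ⟨x, t⟩
    calc P (x, t) = P (![x 0, x 1, x 2], t) := by congr; ext i; fin_cases i <;> rfl
      _ = eval ![√(x 0 ^ 2 + x 1 ^ 2), x 2, t] G := by rw [hG, hP.apply_eq_apply_sqrt]
      _ = aeval q H (x, t) := by
        rw [hH, Real.sq_sqrt (by positivity), aeval_apply_eq_eval]
        refine congrArg (eval · H) ?_
        funext i; fin_cases i <;> simp [q]
  have hq (i : Fin 4) : q i ∈ Algebra.adjoin ℝ invariantGenerators := by
    have mem {g} (hg : g ∈ invariantGenerators) : g ∈ Algebra.adjoin ℝ invariantGenerators :=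
      Algebra.subset_adjoin hg
    fin_cases i
    · convert sub_mem (mem (Set.mem_insert _ _))
        (mem (by simp [invariantGenerators] : (fun p => p.1 2 ^ 2) ∈ invariantGenerators)) using 1
      funext p
      simp [q]
    all_goals exact mem (by simp [invariantGenerators, q])
  rw [hPH]
  exact Algebra.adjoin_le (Set.range_subset_iff.2 hq)
    (by rw [Algebra.adjoin_range_eq_range_aeval]; exact AlgHom.mem_range_self _ H)

theorem invariantPolyFuns_eq_adjoin : invariantPolyFuns = Algebra.adjoin ℝ invariantGenerators :=
  le_antisymm (fun _ hP => mem_adjoin_of_isO2Invariant hP.1 hP.2)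
    (Algebra.adjoin_le invariantGenerators_subset)

/-- The polynomials `|x|²`, `t²`, `x₃t`, `x₃²` generate the algebra of `K'`-invariant
polynomial functions on `ℝ³ × ℝ`. -/
theorem statement13 :
    {P : (Fin 3 → ℝ) × ℝ → ℝ | IsPolyFun4 P ∧
        ∀ A ∈ O2, ∀ p : (Fin 3 → ℝ) × ℝ, P (KAct A p) = P p}
      = ↑(Algebra.adjoin ℝ
          ({fun p => p.1 0 ^ 2 + p.1 1 ^ 2 + p.1 2 ^ 2,
            fun p => p.2 ^ 2,
            fun p => p.1 2 * p.2,
            fun p => p.1 2 ^ 2} :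
            Set ((Fin 3 → ℝ) × ℝ → ℝ))) :=
  congrArg SetLike.coe invariantPolyFuns_eq_adjoin
end
end
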